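/- With Ψ as above (the real-valued functions X_n for n ∈ K ∪ M and Y_n for n ∈ K built from the Vilenkin system), Ψ is a complete orthonormal system of L²(G): if f ∈ L²(G) is orthogonal to every element of Ψ, then f = 0 a.e. -/

import Mathlib

/-!
Complex conjugation permutes the Vilenkin system: `conj ψ_n = ψ_{⊖n}`, since `ψ_n` is a product of
the standard characters of `ℤ/s_kℤ` at the digits of `n`, and the digits of `⊖n` are their negatives
mod `s_k`. As `⊖` is an involution, for every `n` one of `ψ_n`, `conj ψ_n` equals `ψ_m` with
`m ≤ ⊖m`, whose real and imaginary parts are nonzero multiples of `X_m` and `Y_m` (and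
`Im ψ_m = 0` if `m = ⊖m`). Hence `f ⊥ Ψ` forces `f ⊥ ψ_n` for all `n`, and completeness of the
Vilenkin system gives `f = 0`.

The σ-algebras on the factors are arbitrary, so `ψ_n` need not be measurable; what saves the
splitting into real and imaginary parts is that `f * ψ_n = f / conj f * conj (f * conj ψ_n)`.
-/

open MeasureTheory

noncomputable section

/-- `Pprod s k = s 0 * s 1 * ⋯ * s (k-1)`. -/
def Pprod (s : ℕ → ℕ) : ℕ → ℕ
  | 0 => 1
  | k + 1 => Pprod s k * s k

/-- The `k`-th digit of `n` in the mixed-radix expansion determined by `s`. -/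
def digit (s : ℕ → ℕ) (n k : ℕ) : ℕ := (n / Pprod s k) % s k

/-- Digitwise negation `⊖ n`. -/
def oneg (s : ℕ → ℕ) (n : ℕ) : ℕ :=
  ∑ k ∈ Finset.range (n + 1), ((s k - digit s n k) % s k) * Pprod s k

/-- Digitwise addition `n ⊕ m`. -/
def oplus (s : ℕ → ℕ) (n m : ℕ) : ℕ :=
  ∑ k ∈ Finset.range (n + m + 1), ((digit s n k + digit s m k) % s k) * Pprod s k

/-- The complex Vilenkin function `ψ n` on `G = ∏ k, ℤ/(s k)ℤ`. -/
def vil (s : ℕ → ℕ) (n : ℕ) (x : ∀ k, ZMod (s k)) : ℂ :=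
  ∏ k ∈ Finset.range (n + 1),
    Complex.exp (2 * (Real.pi : ℂ) * Complex.I * (digit s n k : ℂ) * ((x k).val : ℂ) / (s k : ℂ))

/-- `X n`: real part (times `√2` when `n ≠ ⊖n`) of the Vilenkin function. -/
def Xf (s : ℕ → ℕ) (n : ℕ) (x : ∀ k, ZMod (s k)) : ℝ :=
  if oneg s n = n then (vil s n x).re else Real.sqrt 2 * (vil s n x).re

/-- `Y n = √2 · Im ψ n`. -/
def Yf (s : ℕ → ℕ) (n : ℕ) (x : ∀ k, ZMod (s k)) : ℝ :=
  Real.sqrt 2 * (vil s n x).im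

open Complex
open scoped ComplexConjugate

section MixedRadix

variable {s : ℕ → ℕ}

lemma Pprod_succ (k : ℕ) : Pprod s (k + 1) = Pprod s k * s k := rfl

lemma Pprod_pos (hs : ∀ k, 0 < s k) (k : ℕ) : 0 < Pprod s k := by
  induction k with
  | zero => simp [Pprod]
  | succ k ih => rw [Pprod_succ]; exact Nat.mul_pos ih (hs k)

lemma Pprod_dvd_Pprod {i k : ℕ} (h : i ≤ k) : Pprod s i ∣ Pprod s k := by
  induction h with
  | refl => rfl
  | step _ ih => exact ih.mul_right _

lemma sum_mul_Pprod_lt {c : ℕ → ℕ} (hc : ∀ k, c k < s k) (K : ℕ) :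
    ∑ k ∈ Finset.range K, c k * Pprod s k < Pprod s K := by
  induction K with
  | zero => simp [Pprod]
  | succ K ih => rw [Finset.sum_range_succ, Pprod_succ]; nlinarith [hc K]

lemma digit_sum_mul_Pprod {c : ℕ → ℕ} (hc : ∀ k, c k < s k) {j K : ℕ} (hj : j < K) :
    digit s (∑ k ∈ Finset.range K, c k * Pprod s k) j = c j := by
  obtain ⟨D, hD⟩ : Pprod s (j + 1) ∣ ∑ k ∈ Finset.Ico (j + 1) K, c k * Pprod s k :=
    Finset.dvd_sum fun k hk => (Pprod_dvd_Pprod (Finset.mem_Ico.mp hk).1).mul_left _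
  have hsplit : ∑ k ∈ Finset.range K, c k * Pprod s k
      = ∑ k ∈ Finset.range j, c k * Pprod s k + Pprod s j * (c j + s j * D) := by
    rw [← Finset.sum_range_add_sum_Ico _ hj, Finset.sum_range_succ, hD, Pprod_succ]; ring
  rw [hsplit, digit, Nat.add_mul_div_left _ _ (Pprod_pos (fun k => (hc k).pos) j),
    Nat.div_eq_of_lt (sum_mul_Pprod_lt hc j), zero_add, Nat.add_mul_mod_self_left,
    Nat.mod_eq_of_lt (hc j)]

lemma self_lt_Pprod (hs : ∀ k, 2 ≤ s k) (k : ℕ) : k < Pprod s k := by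
  induction k with
  | zero => simp [Pprod]
  | succ k ih => rw [Pprod_succ]; nlinarith [hs k]

lemma digit_eq_zero_of_lt (hs : ∀ k, 2 ≤ s k) {n k : ℕ} (h : n < k) : digit s n k = 0 := by
  simp [digit, Nat.div_eq_of_lt (h.trans (self_lt_Pprod hs k))]

lemma mod_Pprod_eq_sum_digit (n K : ℕ) :
    n % Pprod s K = ∑ k ∈ Finset.range K, digit s n k * Pprod s k := by
  induction K with
  | zero => simp [Pprod, Nat.mod_one]
  | succ K ih => rw [Finset.sum_range_succ, ← ih, Pprod_succ, Nat.mod_mul, digit]; ring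

lemma eq_of_digit_eq (hs : ∀ k, 2 ≤ s k) {m n : ℕ} (h : ∀ k, digit s m k = digit s n k) :
    m = n := by
  set K := max m n + 1
  calc m = m % Pprod s K := (Nat.mod_eq_of_lt ((self_lt_Pprod hs K).trans' (by omega))).symm
    _ = n % Pprod s K := by simp only [mod_Pprod_eq_sum_digit, h]
    _ = n := Nat.mod_eq_of_lt ((self_lt_Pprod hs K).trans' (by omega))

lemma oneg_eq_sum (hs : ∀ k, 2 ≤ s k) {n K : ℕ} (hK : n < K) :
    oneg s n = ∑ k ∈ Finset.range K, (s k - digit s n k) % s k * Pprod s k := by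
  refine Finset.sum_subset (Finset.range_subset_range.2 hK) fun k _ hk => ?_
  rw [digit_eq_zero_of_lt hs (by simpa using hk)]
  simp

lemma digit_oneg (hs : ∀ k, 2 ≤ s k) (n j : ℕ) :
    digit s (oneg s n) j = (s j - digit s n j) % s j := by
  rw [oneg_eq_sum hs (Nat.lt_succ_of_le (le_max_left n j))]
  exact digit_sum_mul_Pprod (fun k => Nat.mod_lt _ (by linarith [hs k]))
    (Nat.lt_succ_of_le (le_max_right n j))

lemma natCast_digit_oneg (hs : ∀ k, 2 ≤ s k) (n j : ℕ) :
    (digit s (oneg s n) j : ZMod (s j)) = -digit s n j := by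
  rw [digit_oneg hs, ZMod.natCast_mod, Nat.cast_sub (show digit s n j < s j from Nat.mod_lt _ (by linarith [hs j])).le,
    ZMod.natCast_self, zero_sub]

lemma oneg_oneg (hs : ∀ k, 2 ≤ s k) (n : ℕ) : oneg s (oneg s n) = n := by
  refine eq_of_digit_eq hs fun k => ?_
  have h : (digit s (oneg s (oneg s n)) k : ZMod (s k)) = digit s n k := by
    rw [natCast_digit_oneg hs, natCast_digit_oneg hs, neg_neg]
  simpa [ZMod.natCast_eq_natCast_iff', digit] using h

end MixedRadix

lemma exp_eq_stdAddChar {N : ℕ} [NeZero N] (d : ℕ) (y : ZMod N) :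
    exp (2 * (Real.pi : ℂ) * I * d * (y.val : ℂ) / N) = ZMod.stdAddChar ((d : ZMod N) * y) := by
  rw [show (d : ZMod N) * y = ((d * y.val : ℕ) : ℤ) by simp, ZMod.stdAddChar_coe]
  push_cast
  ring_nf

section Vilenkin

variable {s : ℕ → ℕ}

lemma vil_eq_prod_stdAddChar (hs : ∀ k, 2 ≤ s k) [∀ k, NeZero (s k)] {n K : ℕ} (hK : n < K)
    (x : ∀ k, ZMod (s k)) :
    vil s n x = ∏ k ∈ Finset.range K, ZMod.stdAddChar ((digit s n k : ZMod (s k)) * x k) := by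
  simp only [vil, exp_eq_stdAddChar]
  refine Finset.prod_subset (Finset.range_subset_range.2 hK) fun k _ hk => ?_
  rw [digit_eq_zero_of_lt hs (by simpa using hk)]
  simp

lemma conj_vil (hs : ∀ k, 2 ≤ s k) (n : ℕ) (x : ∀ k, ZMod (s k)) :
    conj (vil s n x) = vil s (oneg s n) x := by
  have : ∀ k, NeZero (s k) := fun k => ⟨by have := hs k; omega⟩
  rw [vil_eq_prod_stdAddChar hs (Nat.lt_succ_of_le (le_max_left n (oneg s n))),
    vil_eq_prod_stdAddChar hs (Nat.lt_succ_of_le (le_max_right n (oneg s n))), map_prod]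
  refine Finset.prod_congr rfl fun k _ => ?_
  rw [natCast_digit_oneg hs, neg_mul, AddChar.map_neg_eq_conj]

lemma im_vil_eq_zero (hs : ∀ k, 2 ≤ s k) {n : ℕ} (hn : oneg s n = n) (x : ∀ k, ZMod (s k)) :
    (vil s n x).im = 0 :=
  conj_eq_iff_im.1 (by rw [conj_vil hs, hn])

lemma norm_vil (n : ℕ) (x : ∀ k, ZMod (s k)) : ‖vil s n x‖ = 1 := by
  simp [vil, norm_prod, Complex.norm_exp]

end Vilenkin

section Integrals

variable {α : Type*} [MeasurableSpace α] {μ : Measure α}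

lemma MeasureTheory.AEStronglyMeasurable.mul_conj {f g : α → ℂ} (hf : AEStronglyMeasurable f μ)
    (hfg : AEStronglyMeasurable (fun x => f x * g x) μ) :
    AEStronglyMeasurable (fun x => f x * conj (g x)) μ := by
  have key : (fun x => f x * conj (g x)) = fun x => f x / conj (f x) * conj (f x * g x) := by
    funext x
    rcases eq_or_ne (f x) 0 with h | h
    · simp [h]
    · rw [map_mul, ← mul_assoc, div_mul_cancel₀ _ ((map_ne_zero _).2 h)]
  rw [key]
  exact (hf.div₀ hf.star).mul hfg.star

lemma integral_mul_eq_zero_of_re_im {f g : α → ℂ} {C : ℝ} (hf : Integrable f μ)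
    (hg : ∀ x, ‖g x‖ ≤ C) (hre : ∫ x, f x * (g x).re ∂μ = 0)
    (him : ∫ x, f x * (g x).im ∂μ = 0) : ∫ x, f x * g x ∂μ = 0 := by
  by_cases hfg : AEStronglyMeasurable (fun x => f x * g x) μ
  swap
  · exact integral_undef fun h => hfg h.1
  have hfg' := hf.1.mul_conj hfg
  have integrable_of_le : ∀ h : α → ℝ, (∀ x, |h x| ≤ C) →
      AEStronglyMeasurable (fun x => f x * h x) μ → Integrable (fun x => f x * (h x : ℂ)) μ :=
    fun h hh hm => (hf.norm.mul_const C).mono' hm (ae_of_all _ fun x => by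
      rw [norm_mul, norm_real, Real.norm_eq_abs]
      exact mul_le_mul_of_nonneg_left (hh x) (norm_nonneg _))
  have hre_int : Integrable (fun x => f x * ((g x).re : ℂ)) μ := by
    refine integrable_of_le _ (fun x => (abs_re_le_norm _).trans (hg x)) ?_
    have : (fun x => f x * ((g x).re : ℂ)) = fun x => (f x * g x + f x * conj (g x)) * 2⁻¹ := by
      funext x; rw [← mul_add, add_conj]; push_cast; ring
    exact this ▸ (hfg.add hfg').mul_const _
  have him_int : Integrable (fun x => f x * ((g x).im : ℂ)) μ := by
    refine integrable_of_le _ (fun x => (abs_im_le_norm _).trans (hg x)) ?_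
    have : (fun x => f x * ((g x).im : ℂ)) =
        fun x => (f x * g x - f x * conj (g x)) * (2 * I)⁻¹ := by
      funext x; rw [← mul_sub, sub_conj]; field_simp; push_cast; ring
    exact this ▸ (hfg.sub hfg').mul_const _
  calc ∫ x, f x * g x ∂μ = ∫ x, f x * ((g x).re : ℂ) + I * (f x * ((g x).im : ℂ)) ∂μ := by
        congr 1; funext x; conv_lhs => rw [← re_add_im (g x)]
        ring
    _ = 0 := by rw [integral_add hre_int (him_int.const_mul I), integral_const_mul, hre, him]; simp

lemma integral_mul_eq_zero_of_const_mul {f : α → ℂ} {g : α → ℝ} {c : ℝ} (hc : c ≠ 0)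
    (h : ∫ x, f x * ((c * g x : ℝ) : ℂ) ∂μ = 0) : ∫ x, f x * (g x : ℂ) ∂μ = 0 := by
  simp_rw [ofReal_mul, mul_left_comm (f _)] at h
  rw [integral_const_mul, mul_eq_zero] at h
  exact h.resolve_left (ofReal_ne_zero.2 hc)

end Integrals

section RealVilenkin

variable {s : ℕ → ℕ} [∀ k, MeasurableSpace (ZMod (s k))] {μ : Measure (∀ k, ZMod (s k))}
  {f : (∀ k, ZMod (s k)) → ℂ} {n : ℕ}

lemma integral_mul_re_vil_eq_zero (h : ∫ x, f x * (Xf s n x : ℂ) ∂μ = 0) :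
    ∫ x, f x * ((vil s n x).re : ℂ) ∂μ = 0 := by
  by_cases hn : oneg s n = n <;> simp only [Xf, hn, if_true, if_false] at h
  · exact h
  · exact integral_mul_eq_zero_of_const_mul (by positivity) h

lemma integral_mul_im_vil_eq_zero (hs : ∀ k, 2 ≤ s k) (hn : n ≤ oneg s n)
    (h : n < oneg s n → ∫ x, f x * (Yf s n x : ℂ) ∂μ = 0) :
    ∫ x, f x * ((vil s n x).im : ℂ) ∂μ = 0 := by
  rcases hn.lt_or_eq with hlt | heq
  · exact integral_mul_eq_zero_of_const_mul (by positivity) (h hlt)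
  · simp [im_vil_eq_zero hs heq.symm]

end RealVilenkin

theorem real_vilenkin_complete_general (s : ℕ → ℕ) (hs : ∀ k, 2 ≤ s k)
    [∀ k, MeasurableSpace (ZMod (s k))]
    (μ : Measure (∀ k, ZMod (s k))) [IsProbabilityMeasure μ]
    (hcomp : ∀ g : (∀ k, ZMod (s k)) → ℂ, MemLp g 2 μ →
      (∀ n : ℕ, ∫ x, g x * starRingEnd ℂ (vil s n x) ∂μ = 0) → g =ᵐ[μ] 0) :
    ∀ f : (∀ k, ZMod (s k)) → ℂ, MemLp f 2 μ →
      (∀ n : ℕ, n ≤ oneg s n → ∫ x, f x * (Xf s n x : ℂ) ∂μ = 0) →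
      (∀ n : ℕ, n < oneg s n → ∫ x, f x * (Yf s n x : ℂ) ∂μ = 0) →
      f =ᵐ[μ] 0 := by
  intro f hf hX hY
  have hfi : Integrable f μ := hf.integrable one_le_two
  have hre_im : ∀ m, m ≤ oneg s m → ∫ x, f x * ((vil s m x).re : ℂ) ∂μ = 0 ∧
      ∫ x, f x * ((vil s m x).im : ℂ) ∂μ = 0 := fun m hm =>
    ⟨integral_mul_re_vil_eq_zero (hX m hm), integral_mul_im_vil_eq_zero hs hm (hY m)⟩
  refine hcomp f hf fun n => ?_
  rcases le_total n (oneg s n) with hn | hn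
  · obtain ⟨hre, him⟩ := hre_im n hn
    refine integral_mul_eq_zero_of_re_im hfi
      (fun x => (norm_conj _).trans_le (norm_vil n x).le) ?_ ?_
    · simpa only [conj_re] using hre
    · simp only [conj_im, ofReal_neg, mul_neg, integral_neg, him, neg_zero]
  · obtain ⟨hre, him⟩ := hre_im (oneg s n) (by rwa [oneg_oneg hs])
    simp only [conj_vil hs]
    exact integral_mul_eq_zero_of_re_im hfi (fun x => (norm_vil _ x).le) hre him

/-- The real Vilenkin system `Ψ` is complete in `L²(G)`. -/
theorem real_vilenkin_complete (s : ℕ → ℕ) (hs : ∀ k, 2 ≤ s k)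
    [∀ k, MeasurableSpace (ZMod (s k))]
    (μ : Measure (∀ k, ZMod (s k))) [IsProbabilityMeasure μ]
    (horth : ∀ n m : ℕ,
      ∫ x, vil s n x * starRingEnd ℂ (vil s m x) ∂μ = if n = m then 1 else 0)
    (hcomp : ∀ g : (∀ k, ZMod (s k)) → ℂ, MemLp g 2 μ →
      (∀ n : ℕ, ∫ x, g x * starRingEnd ℂ (vil s n x) ∂μ = 0) → g =ᵐ[μ] 0) :
    ∀ f : (∀ k, ZMod (s k)) → ℂ, MemLp f 2 μ →
      (∀ n : ℕ, n ≤ oneg s n → ∫ x, f x * (Xf s n x : ℂ) ∂μ = 0) →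
      (∀ n : ℕ, n < oneg s n → ∫ x, f x * (Yf s n x : ℂ) ∂μ = 0) →
      f =ᵐ[μ] 0 :=
  real_vilenkin_complete_general s hs μ hcomp
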